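/- Let H be a β-acyclic hypergraph with a β-elimination ordering ≤ of V(H) and induced lexicographic ordering ≤_H on hyperedges. Let e ∈ H, x ∈ V(H) and w ∈ V(H) with x ≤ w, and let H' := H_e^x \ (H_e^x(x) ∩ H_e^x(w)). If y is a vertex with y < x and f ∈ H is a hyperedge such that H_f^y ⊆ H', then {x, w} ∩ V(H_f^y) ≠ {x, w}, i.e., x and w are not both vertices of H_f^y. -/

import Mathlib

variable {α : Type*} [LinearOrder α]

/-- The vertex set `V(H)` of a hypergraph `H`: the union of its hyperedges. -/
def verts (H : Finset (Finset α)) : Finset α := H.sup id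

/-- The linear order on `α` is a `β`-elimination ordering of `H`: for every vertex `x`,
the set `{e ∩ [≥ x] | e ∈ H, x ∈ e}` is linearly ordered by inclusion (so that `H` is
`β`-acyclic, witnessed by this ordering). -/
def IsBetaElimOrder (H : Finset (Finset α)) : Prop :=
  ∀ x : α, ∀ e ∈ H, ∀ f ∈ H, x ∈ e → x ∈ f →
    e.filter (x ≤ ·) ⊆ f.filter (x ≤ ·) ∨ f.filter (x ≤ ·) ⊆ e.filter (x ≤ ·)

/-- The induced lexicographic ordering `≤_H` on hyperedges:
`e ≤_H f` iff `e = f` or `min((e \ f) ∪ (f \ e)) ∈ e`. -/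
def edgeLE (e f : Finset α) : Prop :=
  e = f ∨ ∃ m ∈ e, ((e \ f) ∪ (f \ e)).min = (m : WithTop α)

/-- One step of a walk in `H` going only through hyperedges `≤_H e` and vertices `≤ x`. -/
def StepBelow (H : Finset (Finset α)) (e : Finset α) (x : α) (g h : Finset α) : Prop :=
  g ∈ H ∧ h ∈ H ∧ edgeLE g e ∧ edgeLE h e ∧ ∃ v ∈ g ∩ h, v ≤ x

open Classical in
/-- `H_e^x`: the sub-hypergraph of `H` formed by `e` together with the hyperedges `f ∈ H`
connected to `e` by a walk going only through hyperedges `≤_H e` and vertices `≤ x`. -/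
noncomputable def Hex (H : Finset (Finset α)) (e : Finset α) (x : α) : Finset (Finset α) :=
  H.filter fun f => edgeLE f e ∧ Relation.ReflTransGen (StepBelow H e x) f e

open Relation

/-!
Suppose `x` and `w` both lie in `V(H_f^y)`: some `g ∋ x` and `h ∋ w` of `H_f^y` are joined by a
walk whose connecting vertices are all `≤ y < x ≤ w`. Let `m` be the smallest connecting vertex
and `a`, `b` two consecutive hyperedges sharing it. By `β`-acyclicity one of `a ∩ [≥ m]`,
`b ∩ [≥ m]` contains the other, say the first, so `a` may be dropped: every vertex that linked
`a` to its other neighbour, and `x` or `w` if `a` carried them, is `≥ m` and hence lies in `b`.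
Eliminating connecting vertices in increasing order shrinks the walk to a single hyperedge of
`H_f^y` containing both `x` and `w`, which contradicts `H_f^y ⊆ H'`.
-/

theorem IsBetaElimOrder.mono {G H : Finset (Finset α)} (hH : IsBetaElimOrder H) (hGH : G ⊆ H) :
    IsBetaElimOrder G :=
  fun x e he f hf hxe hxf => hH x e (hGH he) f (hGH hf) hxe hxf

theorem mem_verts {H : Finset (Finset α)} {x : α} : x ∈ verts H ↔ ∃ e ∈ H, x ∈ e := by
  simp [verts, Finset.mem_sup]

theorem mem_of_filter_le_subset {m u : α} {a b : Finset α}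
    (hab : a.filter (m ≤ ·) ⊆ b.filter (m ≤ ·)) (hu : u ∈ a) (hmu : m ≤ u) : u ∈ b :=
  (Finset.mem_filter.mp (hab (Finset.mem_filter.mpr ⟨hu, hmu⟩))).1

def Linked (S : Finset (Finset α)) (W : Finset α) (p q : Finset α) : Prop :=
  p ∈ S ∧ q ∈ S ∧ ∃ u ∈ W, u ∈ p ∧ u ∈ q

instance {S : Finset (Finset α)} {W : Finset α} : Std.Symm (Linked S W) where
  symm _ _ := fun ⟨hp, hq, u, hu, hup, huq⟩ => ⟨hq, hp, u, hu, huq, hup⟩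

section EliminateMin

variable {S : Finset (Finset α)} {W : Finset α} {m : α}

theorem exists_reflTransGen_linked_of_filter_le_subset (hm : ∀ u ∈ W, m < u)
    {a b d : Finset α} (ha : a ∈ S) (hd : d ∈ S) (hab : ReflTransGen (Linked S W) a b)
    (hbd : b.filter (m ≤ ·) ⊆ d.filter (m ≤ ·)) :
    ∃ a' ∈ S, a.filter (m ≤ ·) ⊆ a'.filter (m ≤ ·) ∧
      ReflTransGen (Linked S W) a' d := by
  rcases hab.cases_tail with rfl | ⟨c, hac, hc, -, u, hu, huc, hub⟩
  · exact ⟨d, hd, hbd, .refl⟩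
  · exact ⟨a, ha, subset_rfl,
      hac.tail ⟨hc, hd, u, hu, huc, mem_of_filter_le_subset hbd hub (hm u hu).le⟩⟩

theorem exists_reflTransGen_linked_of_insert_min (hβ : IsBetaElimOrder S) (hm : ∀ u ∈ W, m < u)
    {a b : Finset α} (ha : a ∈ S) (hab : ReflTransGen (Linked S (insert m W)) a b) :
    ∃ a' ∈ S, ∃ b' ∈ S, a.filter (m ≤ ·) ⊆ a'.filter (m ≤ ·) ∧
      b.filter (m ≤ ·) ⊆ b'.filter (m ≤ ·) ∧ ReflTransGen (Linked S W) a' b' := by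
  induction hab with
  | refl => exact ⟨a, ha, a, ha, subset_rfl, subset_rfl, .refl⟩
  | @tail b d _ hbd ih =>
    obtain ⟨a', ha', b', hb', haa', hbb', ha'b'⟩ := ih
    obtain ⟨hb, hd, u, hu, hub, hud⟩ := hbd
    rcases Finset.mem_insert.mp hu with hum | huW
    · subst u
      have hmb' : m ∈ b' := mem_of_filter_le_subset hbb' hub le_rfl
      have hcmp :
          b'.filter (m ≤ ·) ⊆ d.filter (m ≤ ·) ∨ d.filter (m ≤ ·) ⊆ b'.filter (m ≤ ·) := by
        rcases hβ m b hb d hd hub hud with - | hdb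
        · exact hβ m b' hb' d hd hmb' hud
        · exact .inr (hdb.trans hbb')
      rcases hcmp with hb'd | hdb'
      · obtain ⟨a'', ha'', ha'a'', ha''d⟩ :=
          exists_reflTransGen_linked_of_filter_le_subset hm ha' hd ha'b' hb'd
        exact ⟨a'', ha'', d, hd, haa'.trans ha'a'', subset_rfl, ha''d⟩
      · exact ⟨a', ha', b', hb', haa', hdb', ha'b'⟩
    · have hub' : u ∈ b' := mem_of_filter_le_subset hbb' hub (hm u huW).le
      exact ⟨a', ha', d, hd, haa', subset_rfl, ha'b'.tail ⟨hb', hd, u, huW, hub', hud⟩⟩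

end EliminateMin

theorem IsBetaElimOrder.exists_mem_of_reflTransGen_linked {S : Finset (Finset α)}
    (hβ : IsBetaElimOrder S) {W : Finset α} {a b : Finset α} {x w : α}
    (hab : ReflTransGen (Linked S W) a b) (ha : a ∈ S) (hx : x ∈ a) (hw : w ∈ b)
    (hWx : ∀ u ∈ W, u < x) (hWw : ∀ u ∈ W, u < w) : ∃ c ∈ S, x ∈ c ∧ w ∈ c := by
  induction W using Finset.induction_on_min generalizing a b with
  | empty =>
    rcases hab.cases_tail with rfl | ⟨_, _, -, -, u, hu, -⟩
    · exact ⟨b, ha, hx, hw⟩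
    · exact absurd hu (Finset.notMem_empty u)
  | insert m W hm ih =>
    obtain ⟨a', ha', b', -, haa', hbb', ha'b'⟩ :=
      exists_reflTransGen_linked_of_insert_min hβ hm ha hab
    have hmx := hWx m (Finset.mem_insert_self m W)
    have hmw := hWw m (Finset.mem_insert_self m W)
    exact ih ha'b' ha' (mem_of_filter_le_subset haa' hx hmx.le)
      (mem_of_filter_le_subset hbb' hw hmw.le)
      (fun u hu => hWx u (Finset.mem_insert_of_mem hu))
      (fun u hu => hWw u (Finset.mem_insert_of_mem hu))

section Hex

variable {H : Finset (Finset α)} {f g : Finset α} {y : α}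

theorem mem_Hex {x : α} {e c : Finset α} :
    c ∈ Hex H e x ↔ c ∈ H ∧ edgeLE c e ∧ ReflTransGen (StepBelow H e x) c e := by
  simp only [Hex, Finset.mem_filter]

theorem Hex_subset {x : α} {e : Finset α} : Hex H e x ⊆ H :=
  fun _ hc => (mem_Hex.mp hc).1

theorem reflTransGen_linked_Hex (hg : g ∈ Hex H f y) :
    ReflTransGen (Linked (Hex H f y) ((verts H).filter (· ≤ y))) g f := by
  obtain ⟨-, -, hgf⟩ := mem_Hex.mp hg
  induction hgf using ReflTransGen.head_induction_on with
  | refl => exact .refl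
  | head hstep hg'f ih =>
    obtain ⟨hgH, hg'H, -, hg'e, v, hv, hvy⟩ := hstep
    have hg' : _ ∈ Hex H f y := mem_Hex.mpr ⟨hg'H, hg'e, hg'f⟩
    have hv' := Finset.mem_inter.mp hv
    have hvW : v ∈ (verts H).filter (· ≤ y) :=
      Finset.mem_filter.mpr ⟨mem_verts.mpr ⟨_, hgH, hv'.1⟩, hvy⟩
    exact .head ⟨hg, hg', v, hvW, hv'⟩ (ih hg')

end Hex

theorem inter_verts_Hex_ne_general (H : Finset (Finset α)) (hβ : IsBetaElimOrder H)
    (e : Finset α) (x w : α)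
    (hxw : x ≤ w) (y : α) (hyx : y < x) (f : Finset α)
    (hsub : Hex H f y ⊆ Hex H e x \
      (((Hex H e x).filter fun g => x ∈ g) ∩ ((Hex H e x).filter fun g => w ∈ g))) :
    ({x, w} : Finset α) ∩ verts (Hex H f y) ≠ {x, w} := by
  intro hEq
  rw [Finset.inter_eq_left, Finset.insert_subset_iff, Finset.singleton_subset_iff] at hEq
  obtain ⟨g, hg, hxg⟩ := mem_verts.mp hEq.1
  obtain ⟨h, hh, hwh⟩ := mem_verts.mp hEq.2
  have hgh := (reflTransGen_linked_Hex hg).trans (symm_of _ (reflTransGen_linked_Hex hh))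
  have hbelow : ∀ u ∈ (verts H).filter (· ≤ y), u < x := fun u hu =>
    (Finset.mem_filter.mp hu).2.trans_lt hyx
  obtain ⟨c, hc, hxc, hwc⟩ := (hβ.mono Hex_subset).exists_mem_of_reflTransGen_linked hgh hg
    hxg hwh hbelow fun u hu => (hbelow u hu).trans_le hxw
  obtain ⟨hcHex, hcnot⟩ := Finset.mem_sdiff.mp (hsub hc)
  exact hcnot (Finset.mem_inter.mpr
    ⟨Finset.mem_filter.mpr ⟨hcHex, hxc⟩, Finset.mem_filter.mpr ⟨hcHex, hwc⟩⟩)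

/-- **Claim 3.** Let `H` be `β`-acyclic with `β`-elimination ordering `≤`, `e ∈ H`,
`x ≤ w`, and `H' := H_e^x \ (H_e^x(x) ∩ H_e^x(w))`. If `y < x` and `f ∈ H` satisfy
`H_f^y ⊆ H'`, then `{x, w} ∩ V(H_f^y) ≠ {x, w}`. -/
theorem inter_verts_Hex_ne (H : Finset (Finset α)) (hβ : IsBetaElimOrder H)
    (e : Finset α) (he : e ∈ H) (x w : α) (hx : x ∈ verts H) (hw : w ∈ verts H)
    (hxw : x ≤ w) (y : α) (hy : y ∈ verts H) (hyx : y < x) (f : Finset α) (hf : f ∈ H)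
    (hsub : Hex H f y ⊆ Hex H e x \
      (((Hex H e x).filter fun g => x ∈ g) ∩ ((Hex H e x).filter fun g => w ∈ g))) :
    ({x, w} : Finset α) ∩ verts (Hex H f y) ≠ {x, w} :=
  inter_verts_Hex_ne_general H hβ e x w hxw y hyx f hsub
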